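/- arXiv:2505.13824 — 2 statements merged into one kernel-verified Lean document; each statement's English description precedes it below -/
import Mathlib

section
/- The supremum over y ≥ 1 of (2 - sqrt(y^2 - 4y + 5))/y equals 3/5. -/
theorem sup_eq_three_fifths :
    sSup ((fun y : ℝ => (2 - Real.sqrt (y ^ 2 - 4 * y + 5)) / y) '' {y : ℝ | 1 ≤ y})
      = 3 / 5 := by
  apply IsGreatest.csSup_eq
  constructor
  · refine ⟨5/4, by norm_num, ?_⟩
    have h : (5/4:ℝ) ^ 2 - 4 * (5/4) + 5 = (5/4)^2 := by norm_num
    show (2 - Real.sqrt ((5/4:ℝ) ^ 2 - 4 * (5/4) + 5)) / (5/4) = 3/5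
    rw [h, Real.sqrt_sq (by norm_num)]
    norm_num
  · rintro x ⟨y, hy, rfl⟩
    simp only [Set.mem_setOf_eq] at hy
    have hy0 : (0:ℝ) < y := by linarith
    rw [div_le_iff₀ hy0]
    have hs : Real.sqrt (y ^ 2 - 4 * y + 5) ≥ 0 := Real.sqrt_nonneg _
    rcases le_or_gt (2 - 3/5 * y) 0 with h | h
    · linarith
    · have : 2 - 3/5 * y ≤ Real.sqrt (y ^ 2 - 4 * y + 5) := by
        rw [show (2 - 3/5*y : ℝ) = Real.sqrt ((2 - 3/5*y)^2) from
          (Real.sqrt_sq h.le).symm]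
        apply Real.sqrt_le_sqrt
        nlinarith [sq_nonneg (4*y - 5)]
      linarith
end

section
/- For y ≥ 1, the limit as α → 0 and ε → 0 of 1 − (1−α)·γ₊(α, y, ε), where γ₊(α,y,ε) is the positive root of (2(y+ε)² − y²)γ² + (2/(1−α))(y(2−α) − (y+ε)²)γ − 1 = 0, equals (2 − sqrt(y² − 4y + 5))/y. -/
open Filter

noncomputable def gammaPlus (α y ε : ℝ) : ℝ :=
  let a := 2 * (y + ε) ^ 2 - y ^ 2
  let b := 2 / (1 - α) * (y * (2 - α) - (y + ε) ^ 2)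
  (-b + Real.sqrt (b ^ 2 + 4 * a)) / (2 * a)

theorem nested_limit_gammaPlus (y : ℝ) (hy : 1 ≤ y) :
    ∃ L : ℝ → ℝ,
      (∀ α ∈ Set.Ioo (0 : ℝ) 1,
        Tendsto (fun ε => 1 - (1 - α) * gammaPlus α y ε)
          (nhdsWithin 0 (Set.Ioi 0)) (nhds (L α))) ∧
      Tendsto L (nhdsWithin 0 (Set.Ioi 0))
        (nhds ((2 - Real.sqrt (y ^ 2 - 4 * y + 5)) / y)) := by
  have hy0 : 0 < y := lt_of_lt_of_le one_pos hy
  refine ⟨fun α => 1 - (1 - α) * gammaPlus α y 0, ?_, ?_⟩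
  · intro α hα
    refine Tendsto.mono_left ?_ nhdsWithin_le_nhds
    refine ContinuousAt.tendsto ?_
    simp only [gammaPlus]
    fun_prop (disch := intro h; nlinarith [sq_nonneg y])
  · have h0 : (fun α => 1 - (1 - α) * gammaPlus α y 0) 0
        = (2 - Real.sqrt (y ^ 2 - 4 * y + 5)) / y := by
      simp only [gammaPlus]
      have hb : (2 / (1 - (0:ℝ)) * (y * (2 - 0) - (y + 0) ^ 2)) ^ 2
          + 4 * (2 * (y + 0) ^ 2 - y ^ 2) = 4 * y ^ 2 * (y ^ 2 - 4 * y + 5) := by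
        ring
      rw [hb]
      have hs : Real.sqrt (4 * y ^ 2 * (y ^ 2 - 4 * y + 5))
          = 2 * y * Real.sqrt (y ^ 2 - 4 * y + 5) := by
        rw [show 4 * y ^ 2 * (y ^ 2 - 4 * y + 5) = (2*y)^2 * (y ^ 2 - 4 * y + 5) by ring,
          Real.sqrt_mul (by positivity), Real.sqrt_sq (by positivity)]
      rw [hs]
      have hyne : y ≠ 0 := ne_of_gt hy0
      have h2 : (2 * (2 * (y + 0) ^ 2 - y ^ 2)) ≠ 0 := by nlinarith
      rw [eq_div_iff hyne, sub_mul, one_mul, show ((1:ℝ) - 0) = 1 by norm_num,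
        one_mul, div_mul_eq_mul_div, sub_eq_iff_eq_add, ← sub_eq_iff_eq_add',
        eq_div_iff h2]
      ring
    rw [← h0]
    refine Tendsto.mono_left ?_ nhdsWithin_le_nhds
    refine ContinuousAt.tendsto ?_
    simp only [gammaPlus]
    fun_prop (disch := intro h; nlinarith [sq_nonneg y])
end
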